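/- arXiv:2305.17592 — 2 statements merged into one kernel-verified Lean document; each statement's English description precedes it below -/
import Mathlib

section
/- Lower covering bound for group actions: let Z be a metric space, S a set of injective transformations of Z with metric d_G, and Z₀ ⊆ Z such that for some L > 0: (1) d(z₀, z₀') ≤ L·d(g·z₀, g·z₀') for all z₀, z₀' ∈ Z₀ and g ∈ S, and (2) d_G(g, g') ≤ L·dist(g·Z₀, g'·Z₀) for all g, g' ∈ S, where dist denotes the infimum distance between the two image sets. Then for every δ > 0, N(Z₀, 2δL)·N(S, 2δL) ≤ N(Z, δ). -/
/-- The covering number of a subset `s` of a metric space. -/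
noncomputable def coveringNumber {X : Type*} [MetricSpace X] (s : Set X) (ε : ℝ) : ℕ∞ :=
  sInf {n : ℕ∞ | ∃ t : Finset X, (t.card : ℕ∞) = n ∧ ∀ x ∈ s, ∃ c ∈ t, dist x c ≤ ε}

/-!
Fix a finite `δ`-cover `T` of `Z`. For each `g`, the points of `T` within `δ` of `g • Z₀` pull
back by (1) to a `2δL`-cover of `Z₀`, so there are at least `N(Z₀, 2δL)` of them, and by (2)
these parts of `T` are disjoint for `2δL`-separated `g`. Hence a `2δL`-separated subset of `S`
has at most `|T| / N(Z₀, 2δL)` elements, and a maximal one is a `2δL`-cover of `S`.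
-/

open Finset

section CoveringNumber

variable {X : Type*} [MetricSpace X] {s : Set X} {ε : ℝ}

theorem coveringNumber_le_card {t : Finset X} (ht : ∀ x ∈ s, ∃ c ∈ t, dist x c ≤ ε) :
    coveringNumber s ε ≤ #t :=
  sInf_le ⟨t, rfl, ht⟩

theorem le_coveringNumber {n : ℕ∞}
    (h : ∀ t : Finset X, (∀ x ∈ s, ∃ c ∈ t, dist x c ≤ ε) → n ≤ #t) :
    n ≤ coveringNumber s ε :=
  le_sInf fun _ ⟨t, htn, ht⟩ => htn ▸ h t ht

@[simp]
theorem coveringNumber_empty : coveringNumber (∅ : Set X) ε = 0 :=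
  nonpos_iff_eq_zero.1 <| coveringNumber_le_card (t := ∅) (by simp)

theorem one_le_coveringNumber (hs : s.Nonempty) : 1 ≤ coveringNumber s ε :=
  le_coveringNumber fun t ht => by
    obtain ⟨x, hx⟩ := hs
    obtain ⟨c, hc, -⟩ := ht x hx
    exact_mod_cast Finset.card_pos.2 ⟨c, hc⟩

/-- Recentring an `ε`-cover of `f '' s` at points of `f '' s` costs the factor `2`. -/
theorem coveringNumber_le_coveringNumber_image {Y : Type*} [MetricSpace Y] {f : X → Y} {L : ℝ}
    (hL : 0 ≤ L) (hf : ∀ x ∈ s, ∀ y ∈ s, dist x y ≤ L * dist (f x) (f y)) :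
    coveringNumber s (2 * ε * L) ≤ coveringNumber (f '' s) ε := by
  classical
  refine le_coveringNumber fun t ht => ?_
  let near : Y → Prop := fun c => ∃ x ∈ s, dist (f x) c ≤ ε
  have hnear (c : {c // c ∈ t.filter near}) : near c := (Finset.mem_filter.1 c.2).2
  let center (c : {c // c ∈ t.filter near}) : X := (hnear c).choose
  refine le_trans (coveringNumber_le_card (t := (t.filter near).attach.image center) ?_) ?_
  · intro x hx
    obtain ⟨c, hct, hxc⟩ := ht (f x) ⟨x, hx, rfl⟩
    let c' : {c // c ∈ t.filter near} := ⟨c, Finset.mem_filter.2 ⟨hct, x, hx, hxc⟩⟩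
    obtain ⟨hys, hyc⟩ := (hnear c').choose_spec
    refine ⟨center c', Finset.mem_image_of_mem _ (Finset.mem_attach _ _), ?_⟩
    calc dist x (center c') ≤ L * dist (f x) (f (center c')) := hf x hx _ hys
      _ ≤ L * (ε + ε) := by
        gcongr
        exact dist_triangle_right _ _ c |>.trans (add_le_add hxc hyc)
      _ = 2 * ε * L := by ring
  · exact_mod_cast (Finset.card_image_le.trans_eq (Finset.card_attach)).trans
      (Finset.card_filter_le _ _)

end CoveringNumber

/-- Extend a separated set by an uncovered point until none is left. -/
theorem exists_finset_pairwise_lt_dist_forall_exists_dist_le {X : Type*} [MetricSpace X]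
    {ε : ℝ} (hε : 0 ≤ ε) {n : ℕ}
    (h : ∀ F : Finset X, (F : Set X).Pairwise (fun x y => ε < dist x y) → #F ≤ n) :
    ∃ F : Finset X, (F : Set X).Pairwise (fun x y => ε < dist x y) ∧
      ∀ x, ∃ c ∈ F, dist x c ≤ ε := by
  classical
  suffices ∀ F : Finset X, #F ≤ n → (F : Set X).Pairwise (fun x y => ε < dist x y) →
      ∃ G : Finset X, (G : Set X).Pairwise (fun x y => ε < dist x y) ∧
        ∀ x, ∃ c ∈ G, dist x c ≤ ε from
    this ∅ (by simp) (by simp)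
  refine Finset.strongDownwardInduction fun F ih _ hF => ?_
  by_cases hcov : ∀ x, ∃ c ∈ F, dist x c ≤ ε
  · exact ⟨F, hF, hcov⟩
  push Not at hcov
  obtain ⟨x, hx⟩ := hcov
  have hxF : x ∉ F := fun hxF => (hx x hxF).not_ge (by simpa using hε)
  have hsep : ((insert x F : Finset X) : Set X).Pairwise (fun x y => ε < dist x y) := by
    rw [Finset.coe_insert, Set.pairwise_insert]
    exact ⟨hF, fun c hc _ => ⟨hx c hc, dist_comm x c ▸ hx c hc⟩⟩
  exact ih (h _ hsep) (Finset.ssubset_insert hxF) hsep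

section Action

variable {Z S : Type*} [MetricSpace Z] [MetricSpace S] (act : S → Z → Z) (Z₀ : Set Z) {L δ : ℝ}

theorem coveringNumber_mul_card_le_card (hL : 0 ≤ L)
    (h1 : ∀ z₀ ∈ Z₀, ∀ z₀' ∈ Z₀, ∀ g : S, dist z₀ z₀' ≤ L * dist (act g z₀) (act g z₀'))
    (h2 : ∀ g g' : S, ∀ z₀ ∈ Z₀, ∀ z₀' ∈ Z₀, dist g g' ≤ L * dist (act g z₀) (act g' z₀'))
    {T : Finset Z} (hT : ∀ z, ∃ t ∈ T, dist z t ≤ δ)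
    {F : Finset S} (hF : (F : Set S).Pairwise (fun g g' => 2 * δ * L < dist g g')) :
    coveringNumber Z₀ (2 * δ * L) * #F ≤ #T := by
  classical
  let part (g : S) : Finset Z := T.filter fun t => ∃ z₀ ∈ Z₀, dist (act g z₀) t ≤ δ
  have hpart (g : S) : coveringNumber Z₀ (2 * δ * L) ≤ #(part g) := by
    refine (coveringNumber_le_coveringNumber_image hL fun x hx y hy => h1 x hx y hy g).trans ?_
    refine coveringNumber_le_card ?_
    rintro _ ⟨z₀, hz₀, rfl⟩
    obtain ⟨t, ht, hzt⟩ := hT (act g z₀)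
    exact ⟨t, Finset.mem_filter.2 ⟨ht, z₀, hz₀, hzt⟩, hzt⟩
  have hdisj : (F : Set S).PairwiseDisjoint part := by
    refine hF.mono' fun g g' hgg' => Finset.disjoint_left.2 fun t ht ht' => ?_
    obtain ⟨-, z₀, hz₀, hz₀t⟩ := Finset.mem_filter.1 ht
    obtain ⟨-, z₀', hz₀', hz₀'t⟩ := Finset.mem_filter.1 ht'
    refine hgg'.not_ge ?_
    calc dist g g' ≤ L * dist (act g z₀) (act g' z₀') := h2 g g' z₀ hz₀ z₀' hz₀'
      _ ≤ L * (δ + δ) := by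
        gcongr
        exact dist_triangle_right _ _ t |>.trans (add_le_add hz₀t hz₀'t)
      _ = 2 * δ * L := by ring
  calc coveringNumber Z₀ (2 * δ * L) * #F = ∑ _g ∈ F, coveringNumber Z₀ (2 * δ * L) := by
        rw [Finset.sum_const, nsmul_eq_mul, mul_comm]
    _ ≤ ∑ g ∈ F, (#(part g) : ℕ∞) := Finset.sum_le_sum fun g _ => hpart g
    _ = #(F.biUnion part) := by rw [Finset.card_biUnion hdisj]; push_cast; rfl
    _ ≤ #T := by
        exact_mod_cast card_le_card (biUnion_subset.2 fun g _ => filter_subset _ _)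

end Action

theorem coveringNumber_lower_bound_general {Z S : Type*} [MetricSpace Z] [MetricSpace S]
    (act : S → Z → Z)
    (Z₀ : Set Z)
    (L : ℝ) (hL : 0 < L)
    (h1 : ∀ z₀ ∈ Z₀, ∀ z₀' ∈ Z₀, ∀ g : S,
      dist z₀ z₀' ≤ L * dist (act g z₀) (act g z₀'))
    (h2 : ∀ g g' : S, ∀ z₀ ∈ Z₀, ∀ z₀' ∈ Z₀,
      dist g g' ≤ L * dist (act g z₀) (act g' z₀'))
    (δ : ℝ) (hδ : 0 < δ) :
    coveringNumber Z₀ (2 * δ * L) * coveringNumber (Set.univ : Set S) (2 * δ * L) ≤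
      coveringNumber (Set.univ : Set Z) δ := by
  refine le_coveringNumber fun T hT => ?_
  have hT' (z : Z) : ∃ t ∈ T, dist z t ≤ δ := hT z (Set.mem_univ z)
  rcases Z₀.eq_empty_or_nonempty with rfl | hZ₀
  · simp
  have hcount (F : Finset S) := coveringNumber_mul_card_le_card act Z₀ hL.le h1 h2 hT' (F := F)
  obtain ⟨F, hFsep, hFcov⟩ := exists_finset_pairwise_lt_dist_forall_exists_dist_le
    (by positivity : 0 ≤ 2 * δ * L) (n := #T) fun F hF => ENat.natCast_le_natCast.1 <| by
      simpa using (mul_le_mul_left (one_le_coveringNumber hZ₀) _).trans (hcount F hF)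
  calc coveringNumber Z₀ (2 * δ * L) * coveringNumber Set.univ (2 * δ * L)
      ≤ coveringNumber Z₀ (2 * δ * L) * #F :=
        mul_le_mul_right (coveringNumber_le_card fun g _ => hFcov g) _
    _ ≤ #T := hcount F hFsep

/-- Lower covering bound for group actions. If the action of each
`g ∈ S` expands distances between orbit representatives by a factor at least
`1/L`, and distinct `g, g'` move `Z₀` to sets that are `d_G(g,g')/L`-separated
(i.e. `d_G(g,g') ≤ L · dist(g·Z₀, g'·Z₀)`, stated here for every pair of image
points), then `N(Z₀, 2δL) · N(S, 2δL) ≤ N(Z, δ)`. -/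
theorem coveringNumber_lower_bound {Z S : Type*} [MetricSpace Z] [MetricSpace S]
    (act : S → Z → Z) (hinj : ∀ g : S, Function.Injective (act g))
    (Z₀ : Set Z)
    (L : ℝ) (hL : 0 < L)
    (h1 : ∀ z₀ ∈ Z₀, ∀ z₀' ∈ Z₀, ∀ g : S,
      dist z₀ z₀' ≤ L * dist (act g z₀) (act g z₀'))
    (h2 : ∀ g g' : S, ∀ z₀ ∈ Z₀, ∀ z₀' ∈ Z₀,
      dist g g' ≤ L * dist (act g z₀) (act g' z₀'))
    (δ : ℝ) (hδ : 0 < δ) :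
    coveringNumber Z₀ (2 * δ * L) * coveringNumber (Set.univ : Set S) (2 * δ * L) ≤
      coveringNumber (Set.univ : Set Z) δ :=
  coveringNumber_lower_bound_general act Z₀ L hL h1 h2 δ hδ
end

section
/- Corollary of the product covering bound: under hypotheses (1) d(z₀,z₀') ≤ L·d(g·z₀, g·z₀') for all z₀,z₀' ∈ Z₀_ε and g ∈ Stab_ε, and (2) d_G(g,g') ≤ L·dist(g·Z₀_ε, g'·Z₀_ε) for all g,g' ∈ Stab_ε, the covering numbers satisfy N(Z₀_ε, δ) ≤ N(Z, δ/(2L)) / N(Stab_ε, δ) for every δ > 0, provided N(Stab_ε, δ) is finite and positive. -/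
/-!
A maximal `δ`-separated subset is a `δ`-cover, so both covering numbers on the left are bounded by
the corresponding packing numbers. If `P ⊆ Stab_ε` and `Q ⊆ Z₀_ε` are `δ`-separated, then by (1)
and (2) the points `g • z` with `(g, z) ∈ P × Q` are distinct and pairwise more than `δ / L` apart:
two of them with different `g` are separated by (2), with the same `g` by (1). Hence `|P| |Q|` is at
most the `δ / L`-packing number of `Z`, which is at most its `δ / (2L)`-covering number.
-/

open scoped ENNReal

open Set
open scoped NNReal

theorem coveringNumber_eq_externalCoveringNumber {X : Type*} [MetricSpace X] (s : Set X) {ε : ℝ}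
    (hε : 0 ≤ ε) : coveringNumber s ε = Metric.externalCoveringNumber ε.toNNReal s := by
  have hcover (C : Set X) : Metric.IsCover ε.toNNReal s C ↔ ∀ x ∈ s, ∃ c ∈ C, dist x c ≤ ε := by
    simp only [Metric.IsCover, SetRel.IsCover, mem_ofPred_eq, ENNReal.ofNNReal_toNNReal,
      edist_le_ofReal hε]
  refine le_antisymm (le_iInf₂ fun C hC => ?_) (le_sInf ?_)
  · rcases C.finite_or_infinite with hfin | hinf
    · obtain ⟨t, rfl⟩ := hfin.exists_finset_coe
      exact sInf_le ⟨t, (encard_coe_eq_coe_finsetCard t).symm, (hcover t).1 hC⟩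
    · simp [hinf.encard_eq]
  · rintro _ ⟨t, rfl, ht⟩
    exact (iInf₂_le (t : Set X) ((hcover t).2 ht)).trans_eq (encard_coe_eq_coe_finsetCard t)

lemma edist_le_toNNReal_mul_edist {X Y : Type*} [PseudoMetricSpace X] [PseudoMetricSpace Y]
    {a b : X} {c d : Y} {L : ℝ} (hL : 0 ≤ L) (h : dist a b ≤ L * dist c d) :
    edist a b ≤ L.toNNReal * edist c d := by
  rw [edist_dist, edist_dist, ENNReal.ofNNReal_toNNReal, ← ENNReal.ofReal_mul hL]
  exact ENNReal.ofReal_le_ofReal h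

namespace Metric

variable {X Y W : Type*} [PseudoEMetricSpace X] [PseudoEMetricSpace Y] [PseudoEMetricSpace W]
  {f : X → Y → W} {B : Set X} {A : Set Y} {K η : ℝ≥0}

lemma lt_edist_of_isSeparated_prod
    (h1 : ∀ y ∈ A, ∀ y' ∈ A, ∀ x ∈ B, edist y y' ≤ K * edist (f x y) (f x y'))
    (h2 : ∀ x ∈ B, ∀ x' ∈ B, ∀ y ∈ A, ∀ y' ∈ A, edist x x' ≤ K * edist (f x y) (f x' y'))
    {P : Set X} {Q : Set Y} (hPB : P ⊆ B) (hP : IsSeparated (K * η : ℝ≥0) P)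
    (hQA : Q ⊆ A) (hQ : IsSeparated (K * η : ℝ≥0) Q)
    ⦃p q : X × Y⦄ (hp : p ∈ P ×ˢ Q) (hq : q ∈ P ×ˢ Q) (hpq : p ≠ q) :
    (η : ℝ≥0∞) < edist (f p.1 p.2) (f q.1 q.2) := by
  obtain ⟨x, y⟩ := p
  obtain ⟨x', y'⟩ := q
  obtain ⟨hx, hy⟩ := hp
  obtain ⟨hx', hy'⟩ := hq
  refine lt_of_mul_lt_mul_left' (a := (K : ℝ≥0∞)) ?_
  by_cases hxx : x = x'
  · subst hxx
    have hyy : y ≠ y' := fun h => hpq (by simp [h])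
    calc (K * η : ℝ≥0∞) < edist y y' := by exact_mod_cast hQ hy hy' hyy
      _ ≤ K * edist (f x y) (f x y') := h1 y (hQA hy) y' (hQA hy') x (hPB hx)
  · calc (K * η : ℝ≥0∞) < edist x x' := by exact_mod_cast hP hx hx' hxx
      _ ≤ K * edist (f x y) (f x' y') := h2 x (hPB hx) x' (hPB hx') y (hQA hy) y' (hQA hy')

lemma encard_mul_encard_le_packingNumber_image2
    (h1 : ∀ y ∈ A, ∀ y' ∈ A, ∀ x ∈ B, edist y y' ≤ K * edist (f x y) (f x y'))
    (h2 : ∀ x ∈ B, ∀ x' ∈ B, ∀ y ∈ A, ∀ y' ∈ A, edist x x' ≤ K * edist (f x y) (f x' y'))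
    {P : Set X} {Q : Set Y} (hPB : P ⊆ B)
    (hP : IsSeparated (K * η : ℝ≥0) P) (hQA : Q ⊆ A) (hQ : IsSeparated (K * η : ℝ≥0) Q) :
    P.encard * Q.encard ≤ packingNumber η (image2 f B A) := by
  have hsep := lt_edist_of_isSeparated_prod h1 h2 hPB hP hQA hQ
  have hinj : InjOn (fun p : X × Y => f p.1 p.2) (P ×ˢ Q) := fun p hp q hq hfpq => by
    by_contra hpq
    simpa [hfpq] using hsep hp hq hpq
  have hsep_image : IsSeparated η ((fun p : X × Y => f p.1 p.2) '' (P ×ˢ Q)) := by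
    rintro _ ⟨p, hp, rfl⟩ _ ⟨q, hq, rfl⟩ hne
    exact hsep hp hq fun h => hne (h ▸ rfl)
  calc P.encard * Q.encard = ((fun p : X × Y => f p.1 p.2) '' (P ×ˢ Q)).encard := by
        rw [hinj.encard_image, encard_prod]
    _ ≤ packingNumber η (image2 f B A) := hsep_image.encard_le_packingNumber <| by
        rw [image_prod]; exact image2_subset hPB hQA

lemma packingNumber_mul_packingNumber_le_packingNumber_image2
    (h1 : ∀ y ∈ A, ∀ y' ∈ A, ∀ x ∈ B, edist y y' ≤ K * edist (f x y) (f x y'))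
    (h2 : ∀ x ∈ B, ∀ x' ∈ B, ∀ y ∈ A, ∀ y' ∈ A, edist x x' ≤ K * edist (f x y) (f x' y')) :
    packingNumber (K * η) B * packingNumber (K * η) A ≤ packingNumber η (image2 f B A) := by
  simp only [packingNumber, ENat.iSup_mul, ENat.mul_iSup, iSup_le_iff]
  exact fun Q hQA hQ P hPB hP => encard_mul_encard_le_packingNumber_image2 h1 h2 hPB hP hQA hQ

end Metric

theorem coveringNumber_quotient_bound_general {Z S : Type*} [MetricSpace Z] [MetricSpace S]
    (act : S → Z → Z)
    (Z₀ε : Set Z)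
    (L : ℝ) (hL : 0 < L)
    (h1 : ∀ z₀ ∈ Z₀ε, ∀ z₀' ∈ Z₀ε, ∀ g : S,
      dist z₀ z₀' ≤ L * dist (act g z₀) (act g z₀'))
    (h2 : ∀ g g' : S, ∀ z₀ ∈ Z₀ε, ∀ z₀' ∈ Z₀ε,
      dist g g' ≤ L * dist (act g z₀) (act g' z₀'))
    (δ : ℝ) (hδ : 0 < δ)
    (hpos : 0 < coveringNumber (Set.univ : Set S) δ)
    (hfin : coveringNumber (Set.univ : Set S) δ < ⊤) :
    (coveringNumber Z₀ε δ : ℝ≥0∞) ≤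
      (coveringNumber (Set.univ : Set Z) (δ / (2 * L)) : ℝ≥0∞) /
        (coveringNumber (Set.univ : Set S) δ : ℝ≥0∞) := by
  rw [ENNReal.le_div_iff_mul_le (.inl (by simpa using hpos.ne')) (.inl (by simpa using hfin.ne)),
    ← ENat.toENNReal_mul, ENat.toENNReal_le]
  have hradius : L.toNNReal * (2 * (δ / (2 * L)).toNNReal) = δ.toNNReal := by
    rw [← NNReal.coe_inj]
    push_cast [Real.coe_toNNReal _ hL.le, Real.coe_toNNReal _ hδ.le,
      Real.coe_toNNReal _ (by positivity : 0 ≤ δ / (2 * L))]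
    field_simp
  simp only [coveringNumber_eq_externalCoveringNumber _ hδ.le,
    coveringNumber_eq_externalCoveringNumber _ (by positivity : 0 ≤ δ / (2 * L))]
  open Metric in
  calc externalCoveringNumber δ.toNNReal Z₀ε * externalCoveringNumber δ.toNNReal (univ : Set S)
      ≤ packingNumber δ.toNNReal (univ : Set S) * packingNumber δ.toNNReal Z₀ε := by
        rw [mul_comm]
        gcongr <;> exact (externalCoveringNumber_le_coveringNumber _ _).trans
          (coveringNumber_le_packingNumber _ _)
    _ ≤ packingNumber (2 * (δ / (2 * L)).toNNReal) (image2 act univ Z₀ε) := by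
        rw [← hradius]
        exact packingNumber_mul_packingNumber_le_packingNumber_image2
          (fun z hz z' hz' g _ => edist_le_toNNReal_mul_edist hL.le (h1 z hz z' hz' g))
          (fun g _ g' _ z hz z' hz' => edist_le_toNNReal_mul_edist hL.le (h2 g g' z hz z' hz'))
    _ ≤ externalCoveringNumber (δ / (2 * L)).toNNReal (image2 act univ Z₀ε) :=
        packingNumber_two_mul_le_externalCoveringNumber _ _
    _ ≤ externalCoveringNumber (δ / (2 * L)).toNNReal (univ : Set Z) :=
        externalCoveringNumber_mono_set (subset_univ _)

/-- Corollary of the product covering bound: under the distance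
lower bounds (1) and (2) for the action of `Stab_ε` on the set of orbit
representatives `Z₀ε`, one has `N(Z₀ε, δ) ≤ N(Z, δ/(2L)) / N(Stab_ε, δ)`,
provided `N(Stab_ε, δ)` is finite and positive. -/
theorem coveringNumber_quotient_bound {Z S : Type*} [MetricSpace Z] [MetricSpace S]
    (act : S → Z → Z) (hinj : ∀ g : S, Function.Injective (act g))
    (Z₀ε : Set Z)
    (L : ℝ) (hL : 0 < L)
    (h1 : ∀ z₀ ∈ Z₀ε, ∀ z₀' ∈ Z₀ε, ∀ g : S,
      dist z₀ z₀' ≤ L * dist (act g z₀) (act g z₀'))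
    (h2 : ∀ g g' : S, ∀ z₀ ∈ Z₀ε, ∀ z₀' ∈ Z₀ε,
      dist g g' ≤ L * dist (act g z₀) (act g' z₀'))
    (δ : ℝ) (hδ : 0 < δ)
    (hpos : 0 < coveringNumber (Set.univ : Set S) δ)
    (hfin : coveringNumber (Set.univ : Set S) δ < ⊤) :
    (coveringNumber Z₀ε δ : ℝ≥0∞) ≤
      (coveringNumber (Set.univ : Set Z) (δ / (2 * L)) : ℝ≥0∞) /
        (coveringNumber (Set.univ : Set S) δ : ℝ≥0∞) :=
  coveringNumber_quotient_bound_general act Z₀ε L hL h1 h2 δ hδ hpos hfin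
end
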